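/- arXiv:1807.05255 — 2 statements merged into one kernel-verified Lean document; each statement's English description precedes it below -/
import Mathlib

section
/- For nonnegative integers n and M with M ≥ 1, ∫_{-1/2}^{1/2} (sin((M+1)πx)/sin(πx))² · U_n(cos 2πx) · sin²(2πx) dx equals 1 if 0 ≤ n < M, equals 1/2 if n = M, and equals 0 if n > M. -/
/-!
With `t = πx` one has `U_n(cos 2t) sin 2t = sin (2(n+1)t)`, while the classical identity
`sin t · ∑_{j<N} sin ((2j+1)t) = sin² (Nt)` and `2 cos t sin ((2j+1)t) = sin (2(j+1)t) + sin (2jt)`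
give `(sin (Nt) / sin t)² sin 2t = ∑_{j<N} (sin (2(j+1)t) + sin (2jt))`. The integrand is therefore a
trigonometric polynomial, and orthogonality of the `sin (2πax)` on `[-1/2, 1/2]` leaves a
contribution `1/2` from each of `j = n` and `j = n + 1` that lies below `N = M + 1`.
-/

open Real intervalIntegral

/-- Chebyshev polynomials of the second kind, as real functions. -/
noncomputable def chebU : ℕ → ℝ → ℝ
  | 0, _ => 1
  | 1, x => 2 * x
  | (n + 2), x => 2 * x * chebU (n + 1) x - chebU n x

/-- The Fejér kernel `Δ_M(x) = (1/M) (sin(πMx)/sin(πx))²`, extended by continuity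
(value `M`) at the points where `sin(πx) = 0`. -/
noncomputable def fejer (M : ℕ) (x : ℝ) : ℝ :=
  if Real.sin (Real.pi * x) = 0 then (M : ℝ)
  else (1 / (M : ℝ)) * (Real.sin (Real.pi * M * x) / Real.sin (Real.pi * x)) ^ 2

open Finset

open Polynomial Chebyshev in
theorem chebU_eq_eval_U : ∀ (n : ℕ) (x : ℝ), chebU n x = (U ℝ n).eval x
  | 0, x => by simp [chebU]
  | 1, x => by simp [chebU]
  | n + 2, x => by
    rw [chebU, chebU_eq_eval_U (n + 1), chebU_eq_eval_U n]
    push_cast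
    simp [U_add_two]

theorem chebU_cos_mul_sin (n : ℕ) (θ : ℝ) : chebU n (cos θ) * sin θ = sin ((n + 1) * θ) := by
  simp [chebU_eq_eval_U]

theorem sin_natCast_mul_eq_zero {t : ℝ} (ht : sin t = 0) (k : ℕ) : sin (k * t) = 0 := by
  obtain ⟨m, rfl⟩ := sin_eq_zero_iff.1 ht
  simpa [← mul_assoc] using sin_int_mul_pi (k * m)

theorem sin_div_sin_sq_mul_sin_two_mul (N : ℕ) (t : ℝ) :
    (sin (N * t) / sin t) ^ 2 * sin (2 * t) =
      ∑ j ∈ range N, (sin ((j + 1 : ℕ) * (2 * t)) + sin (j * (2 * t))) := by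
  by_cases ht : sin t = 0
  · -- recast `2 * k` as a natural number so that `sin_natCast_mul_eq_zero` applies
    simp only [ht, div_zero, ← mul_assoc, ← Nat.cast_ofNat (R := ℝ), ← Nat.cast_mul,
      sin_natCast_mul_eq_zero ht]
    simp
  have hsum : sin t * ∑ j ∈ range N, sin (2 * t * j + t) = sin (N * t) ^ 2 := by
    have h := sin_mul_sum_sin N (2 * t) t
    rw [show 2 * t / 2 = t by ring, show (N : ℝ) * (2 * t) / 2 = N * t by ring,
      show ((N : ℝ) - 1) * (2 * t) / 2 + t = N * t by ring] at h
    rw [h, sq]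
  have hterm (j : ℕ) :
      2 * sin (2 * t * j + t) * cos t = sin ((j + 1 : ℕ) * (2 * t)) + sin (j * (2 * t)) := by
    rw [two_mul_sin_mul_cos, add_comm]
    push_cast
    ring_nf
  calc (sin (N * t) / sin t) ^ 2 * sin (2 * t)
      = (sin t * ∑ j ∈ range N, sin (2 * t * j + t)) / sin t ^ 2 * (2 * sin t * cos t) := by
        rw [hsum, sin_two_mul, div_pow]
    _ = ∑ j ∈ range N, 2 * sin (2 * t * j + t) * cos t := by
        rw [mul_sum, sum_div, sum_mul]
        refine sum_congr rfl fun j _ => ?_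
        field_simp
    _ = _ := sum_congr rfl fun j _ => hterm j

theorem natCast_mul_fejer_mul_sin_two_pi_mul {N : ℕ} (hN : N ≠ 0) (x : ℝ) :
    N * fejer N x * sin (2 * π * x) =
      (sin (N * (π * x)) / sin (π * x)) ^ 2 * sin (2 * π * x) := by
  have h2 : sin (2 * π * x) = 2 * sin (π * x) * cos (π * x) := by rw [mul_assoc, sin_two_mul]
  unfold fejer
  split_ifs with h
  · simp [h2, h]
  · rw [show π * N * x = N * (π * x) by ring]
    field_simp

theorem integral_cos_int_mul (m : ℤ) :
    ∫ x in (-1/2 : ℝ)..(1/2), cos (m * (2 * π * x)) = if m = 0 then 1 else 0 := by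
  split_ifs with hm
  · simp [hm]
    norm_num
  have hc : (m : ℝ) * (2 * π) ≠ 0 := by simp [hm, pi_ne_zero]
  simp_rw [show ∀ x : ℝ, (m : ℝ) * (2 * π * x) = m * (2 * π) * x from fun x => by ring]
  rw [integral_comp_mul_left cos hc, integral_cos,
    show (m : ℝ) * (2 * π) * (1 / 2) = m * π by ring,
    show (m : ℝ) * (2 * π) * (-1 / 2) = (-m : ℤ) * π by push_cast; ring,
    sin_int_mul_pi, sin_int_mul_pi, sub_zero, smul_zero]

theorem integral_sin_natCast_mul_mul_sin {a b : ℕ} (hb : b ≠ 0) :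
    ∫ x in (-1/2 : ℝ)..(1/2), sin (a * (2 * π * x)) * sin (b * (2 * π * x)) =
      if a = b then 1 / 2 else 0 := by
  have h (x : ℝ) : sin (a * (2 * π * x)) * sin (b * (2 * π * x)) =
      (cos ((a - b : ℤ) * (2 * π * x)) - cos ((a + b : ℤ) * (2 * π * x))) / 2 := by
    rw [eq_div_iff two_ne_zero, mul_comm, ← mul_assoc, two_mul_sin_mul_sin]
    push_cast
    ring_nf
  simp_rw [h]
  rw [integral_div, integral_sub (Continuous.intervalIntegrable (by fun_prop) _ _)
    (Continuous.intervalIntegrable (by fun_prop) _ _),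
    integral_cos_int_mul, integral_cos_int_mul]
  split_ifs <;> first | omega | norm_num

theorem integral_sin_succ_add_sin_mul_sin (j n : ℕ) :
    ∫ x in (-1/2 : ℝ)..(1/2),
        (sin ((j + 1 : ℕ) * (2 * π * x)) + sin (j * (2 * π * x))) *
          sin ((n + 1 : ℕ) * (2 * π * x)) =
      (if j = n then 1 / 2 else 0) + (if j = n + 1 then 1 / 2 else 0) := by
  simp_rw [add_mul]
  rw [integral_add (Continuous.intervalIntegrable (by fun_prop) _ _)
    (Continuous.intervalIntegrable (by fun_prop) _ _),
    integral_sin_natCast_mul_mul_sin n.succ_ne_zero,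
    integral_sin_natCast_mul_mul_sin n.succ_ne_zero]
  simp

theorem natCast_succ_mul_fejer_mul_chebU_eq_sum (n M : ℕ) (x : ℝ) :
    ((M : ℝ) + 1) * fejer (M + 1) x * chebU n (cos (2 * π * x)) * sin (2 * π * x) ^ 2 =
      ∑ j ∈ range (M + 1), (sin ((j + 1 : ℕ) * (2 * π * x)) + sin (j * (2 * π * x))) *
        sin ((n + 1 : ℕ) * (2 * π * x)) := by
  calc _ = ((M + 1 : ℕ) * fejer (M + 1) x * sin (2 * π * x)) *
          (chebU n (cos (2 * π * x)) * sin (2 * π * x)) := by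
        push_cast
        ring
    _ = (sin ((M + 1 : ℕ) * (π * x)) / sin (π * x)) ^ 2 * sin (2 * (π * x)) *
          sin ((n + 1 : ℕ) * (2 * π * x)) := by
        rw [natCast_mul_fejer_mul_sin_two_pi_mul M.succ_ne_zero, chebU_cos_mul_sin,
          mul_assoc 2 π x]
        push_cast
        rfl
    _ = _ := by
        rw [sin_div_sin_sq_mul_sin_two_mul, sum_mul, mul_assoc 2 π x]

theorem stmt3_general (n M : ℕ) :
    (∫ x in (-1/2 : ℝ)..(1/2),
        ((M : ℝ) + 1) * fejer (M + 1) x * chebU n (Real.cos (2 * Real.pi * x)) *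
          (Real.sin (2 * Real.pi * x)) ^ 2)
      = if n < M then 1 else if n = M then 1/2 else 0 := by
  simp_rw [natCast_succ_mul_fejer_mul_chebU_eq_sum]
  rw [integral_finsetSum fun j _ => Continuous.intervalIntegrable (by fun_prop) _ _]
  simp_rw [integral_sin_succ_add_sin_mul_sin, sum_add_distrib, sum_ite_eq', mem_range]
  split_ifs <;> first | omega | norm_num

/-- `(sin((M+1)πx)/sin(πx))² = (M+1)·Δ_{M+1}(x)`, interpreted by continuity. -/
theorem stmt3 (n M : ℕ) (hM : 1 ≤ M) :
    (∫ x in (-1/2 : ℝ)..(1/2),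
        ((M : ℝ) + 1) * fejer (M + 1) x * chebU n (Real.cos (2 * Real.pi * x)) *
          (Real.sin (2 * Real.pi * x)) ^ 2)
      = if n < M then 1 else if n = M then 1/2 else 0 :=
  stmt3_general n M
end

section
/- Let β ∈ ℝ, M ≥ 1 an integer, and n ∈ {M−1, M}. Then (M+1) ∫_{-1/2}^{1/2} Δ_{M+1}(x−β) · U_n(cos 2πx) · sin²(2πx) dx = ((M−n+1)/2)·cos(2πnβ). -/
/-!
The Fejér kernel is a squared Dirichlet kernel: `(M+1) Δ_{M+1}(y) = |∑_{k ≤ M} e^{2πiky}|²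
= ∑_{k,l ≤ M} cos(2π(k-l)y)`, and `U_n(cos θ) sin² θ = sin((n+1)θ) sin θ = (cos nθ - cos (n+2)θ)/2`.
By orthogonality on a period, pairing the kernel shifted by `β` with `cos(2πmx)` counts the pairs
with `|k - l| = m`, giving `(M+1-m)₊ cos(2πmβ)`. When `n ≥ M-1` the frequency `n+2` exceeds `M`,
so only `(M+1-n)/2 · cos(2πnβ)` survives.
-/

open Real intervalIntegral

open Finset

theorem chebU_cos_mul_sin_sq (n : ℕ) (θ : ℝ) :
    chebU n (cos θ) * sin θ ^ 2 = (cos (n * θ) - cos ((n + 2) * θ)) / 2 := by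
  rw [sq, ← mul_assoc, chebU_cos_mul_sin, eq_div_iff two_ne_zero, mul_comm, ← mul_assoc,
    two_mul_sin_mul_sin]
  ring_nf

theorem sum_range_sin_sub_eq_zero (M : ℕ) (φ : ℝ) :
    ∑ k ∈ range (M + 1), sin ((2 * k - M) * φ) = 0 := by
  have h := sum_range_reflect (fun k : ℕ => sin ((2 * k - M) * φ)) (M + 1)
  have hrefl : ∀ k ∈ range (M + 1),
      sin ((2 * ((M + 1 - 1 - k : ℕ) : ℝ) - M) * φ) = - sin ((2 * k - M) * φ) := by
    intro k hk
    rw [Nat.add_sub_cancel, Nat.cast_sub (by simpa [Nat.lt_succ_iff] using hk), ← sin_neg]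
    ring_nf
  rw [sum_congr rfl hrefl, sum_neg_distrib] at h
  linarith

theorem sum_range_cos_sub_mul_sin (M : ℕ) (φ : ℝ) :
    (∑ k ∈ range (M + 1), cos ((2 * k - M) * φ)) * sin φ = sin ((M + 1) * φ) := by
  set f : ℕ → ℝ := fun k => sin ((2 * k - M - 1) * φ)
  have htel : ∀ k ∈ range (M + 1), cos ((2 * k - M) * φ) * sin φ = (f (k + 1) - f k) / 2 := by
    intro k _
    simp only [f, Nat.cast_succ]
    rw [show (2 * (k + 1 : ℝ) - M - 1) * φ = (2 * k - M) * φ + φ by ring,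
      show (2 * (k : ℝ) - M - 1) * φ = (2 * k - M) * φ - φ by ring, sin_add, sin_sub]
    ring
  rw [sum_mul, sum_congr rfl htel, ← sum_div, sum_range_sub f]
  simp only [f, Nat.cast_succ, Nat.cast_zero]
  rw [show (2 * 0 - M - 1 : ℝ) * φ = -((M + 1) * φ) by ring, sin_neg]
  ring_nf

theorem sq_sum_cos_add_sq_sum_sin {ι : Type*} (s : Finset ι) (a : ι → ℝ) :
    (∑ i ∈ s, cos (a i)) ^ 2 + (∑ i ∈ s, sin (a i)) ^ 2
      = ∑ i ∈ s, ∑ j ∈ s, cos (a i - a j) := by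
  simp only [sq, sum_mul_sum, ← sum_add_distrib, cos_sub]

noncomputable def fejerSum (N : ℕ) (y : ℝ) : ℝ :=
  ∑ k ∈ range N, ∑ l ∈ range N, cos (2 * π * ((k : ℝ) - l) * y)

theorem natCast_add_one_mul_fejer (M : ℕ) (y : ℝ) :
    ((M : ℝ) + 1) * fejer (M + 1) y = fejerSum (M + 1) y := by
  unfold fejer
  split_ifs with h
  · obtain ⟨j, hj⟩ := sin_eq_zero_iff.mp h
    have hy : y = j := mul_left_cancel₀ pi_ne_zero (by linarith)
    have hterm : ∀ k l : ℕ, cos (2 * π * ((k : ℝ) - l) * y) = 1 := fun k l => by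
      rw [hy, show 2 * π * ((k : ℝ) - l) * j = (((k - l) * j : ℤ) : ℝ) * (2 * π) by push_cast; ring]
      exact cos_int_mul_two_pi _
    simp only [fejerSum, hterm, sum_const, card_range, nsmul_eq_mul, mul_one]
    push_cast
    ring
  · -- Centred at `M/2`, the Dirichlet sum has vanishing sine part, so its square is `|D|²`.
    set a : ℕ → ℝ := fun k => (2 * k - M) * (π * y)
    have hsum : fejerSum (M + 1) y = ∑ k ∈ range (M + 1), ∑ l ∈ range (M + 1), cos (a k - a l) := by
      unfold fejerSum a
      congr! 3
      ring
    rw [hsum, ← sq_sum_cos_add_sq_sum_sin, sum_range_sin_sub_eq_zero,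
      show π * ((M + 1 : ℕ) : ℝ) * y = (M + 1) * (π * y) by push_cast; ring,
      ← sum_range_cos_sub_mul_sin]
    push_cast
    field_simp
    simp only [a, mul_assoc]
    ring

theorem integral_cos_two_pi_int_mul_add (j : ℤ) (c : ℝ) :
    ∫ x in (-1/2 : ℝ)..1/2, cos (2 * π * j * x + c) = if j = 0 then cos c else 0 := by
  split_ifs with hj
  · simp only [hj, Int.cast_zero, mul_zero, zero_mul, zero_add, integral_const, smul_eq_mul]
    ring
  · have hc : 2 * π * j ≠ 0 := mul_ne_zero (by positivity) (Int.cast_ne_zero.mpr hj)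
    rw [integral_comp_mul_add (fun x => cos x) hc, integral_cos,
      show 2 * π * j * (1/2) + c = c + j * π by ring,
      show 2 * π * j * (-1/2) + c = c - j * π by ring, sin_add, sin_sub, sin_int_mul_pi]
    simp

theorem integral_cos_mul_cos (j m : ℤ) (β : ℝ) :
    ∫ x in (-1/2 : ℝ)..1/2, cos (2 * π * j * (x - β)) * cos (2 * π * m * x)
      = ((if j = m then 1 else 0) + (if j = -m then 1 else 0)) / 2 * cos (2 * π * m * β) := by
  have hpt : ∀ x : ℝ, cos (2 * π * j * (x - β)) * cos (2 * π * m * x)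
      = (cos (2 * π * (j - m : ℤ) * x + -(2 * π * j * β))
        + cos (2 * π * (j + m : ℤ) * x + -(2 * π * j * β))) / 2 := fun x => by
    rw [eq_div_iff two_ne_zero, mul_comm, ← mul_assoc, two_mul_cos_mul_cos]
    push_cast
    ring_nf
  have hdiff : (if j - m = 0 then cos (-(2 * π * j * β)) else 0)
      = (if j = m then 1 else 0) * cos (2 * π * m * β) := by
    split_ifs with h h' h'
    · rw [h', one_mul, cos_neg]
    · omega
    · omega
    · simp
  have hsum : (if j + m = 0 then cos (-(2 * π * j * β)) else 0)
      = (if j = -m then 1 else 0) * cos (2 * π * m * β) := by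
    split_ifs with h h' h'
    · rw [h', one_mul, Int.cast_neg]
      ring_nf
    · omega
    · omega
    · simp
  simp_rw [hpt]
  rw [integral_div, integral_add (Continuous.intervalIntegrable (by fun_prop) _ _)
    (Continuous.intervalIntegrable (by fun_prop) _ _), integral_cos_two_pi_int_mul_add,
    integral_cos_two_pi_int_mul_add, hdiff, hsum]
  ring

theorem sum_range_sum_range_ite_sub_eq (N m : ℕ) :
    ∑ k ∈ range N, ∑ l ∈ range N, (if (k : ℤ) - l = m then (1 : ℝ) else 0) = (N - m : ℕ) := by
  have hinner : ∀ l : ℕ, ∑ k ∈ range N, (if (k : ℤ) - l = m then (1 : ℝ) else 0)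
      = if l + m < N then 1 else 0 := fun l => by
    simp_rw [show ∀ k : ℕ, ((k : ℤ) - l = m ↔ l + m = k) from fun k => by omega, sum_ite_eq,
      mem_range]
  rw [sum_comm]
  simp_rw [hinner, sum_boole]
  rw [show {l ∈ range N | l + m < N} = range (N - m) by ext; simp only [mem_filter, mem_range]; omega,
    card_range]

theorem sum_range_sum_range_ite_sub_eq_neg (N m : ℕ) :
    ∑ k ∈ range N, ∑ l ∈ range N, (if (k : ℤ) - l = -m then (1 : ℝ) else 0) = (N - m : ℕ) := by
  rw [sum_comm, ← sum_range_sum_range_ite_sub_eq]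
  simp_rw [show ∀ k l : ℕ, ((l : ℤ) - k = -m ↔ (k : ℤ) - l = m) from fun k l => by omega]

theorem integral_fejerSum_mul_cos (N m : ℕ) (β : ℝ) :
    ∫ x in (-1/2 : ℝ)..1/2, fejerSum N (x - β) * cos (2 * π * m * x)
      = (N - m : ℕ) * cos (2 * π * m * β) := by
  have hterm : ∀ k l : ℕ,
      ∫ x in (-1/2 : ℝ)..1/2, cos (2 * π * ((k : ℝ) - l) * (x - β)) * cos (2 * π * m * x)
        = ((if (k : ℤ) - l = m then 1 else 0) + (if (k : ℤ) - l = -m then 1 else 0)) / 2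
          * cos (2 * π * m * β) := fun k l => by
    simpa using integral_cos_mul_cos ((k : ℤ) - l) m β
  simp only [fejerSum, sum_mul]
  rw [integral_finsetSum fun k _ => ?_]
  swap
  · exact Continuous.intervalIntegrable (by fun_prop) _ _
  rw [sum_congr rfl fun k _ => integral_finsetSum fun l _ => ?_]
  swap
  · exact Continuous.intervalIntegrable (by fun_prop) _ _
  simp_rw [hterm, ← sum_mul, ← sum_div, sum_add_distrib, sum_range_sum_range_ite_sub_eq,
    sum_range_sum_range_ite_sub_eq_neg]
  ring

@[fun_prop]
theorem continuous_fejerSum (N : ℕ) : Continuous (fejerSum N) := by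
  unfold fejerSum
  fun_prop

theorem natCast_add_one_mul_integral_fejer_mul_chebU (M n : ℕ) (β : ℝ) :
    ((M : ℝ) + 1) * ∫ x in (-1/2 : ℝ)..1/2,
        fejer (M + 1) (x - β) * chebU n (cos (2 * π * x)) * sin (2 * π * x) ^ 2
      = ((M + 1 - n : ℕ) * cos (2 * π * n * β)
          - (M + 1 - (n + 2) : ℕ) * cos (2 * π * (n + 2 : ℕ) * β)) / 2 := by
  have hpt : ∀ x : ℝ,
      ((M : ℝ) + 1) * (fejer (M + 1) (x - β) * chebU n (cos (2 * π * x)) * sin (2 * π * x) ^ 2)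
        = (fejerSum (M + 1) (x - β) * cos (2 * π * n * x)
          - fejerSum (M + 1) (x - β) * cos (2 * π * (n + 2 : ℕ) * x)) / 2 := fun x => by
    rw [mul_assoc, chebU_cos_mul_sin_sq, ← mul_assoc, natCast_add_one_mul_fejer]
    push_cast
    ring_nf
  rw [← integral_const_mul]
  simp_rw [hpt]
  rw [integral_div, integral_sub (Continuous.intervalIntegrable (by fun_prop) _ _)
    (Continuous.intervalIntegrable (by fun_prop) _ _), integral_fejerSum_mul_cos,
    integral_fejerSum_mul_cos]

theorem stmt8_general (β : ℝ) (M : ℕ) (n : ℕ) (hn : n + 1 = M ∨ n = M) :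
    ((M : ℝ) + 1) * ∫ x in (-1/2 : ℝ)..(1/2),
        fejer (M + 1) (x - β) * chebU n (Real.cos (2 * Real.pi * x)) *
          (Real.sin (2 * Real.pi * x)) ^ 2
      = (((M : ℝ) - n + 1) / 2) * Real.cos (2 * Real.pi * n * β) := by
  rw [natCast_add_one_mul_integral_fejer_mul_chebU, show M + 1 - (n + 2) = 0 by omega,
    Nat.cast_sub (by omega)]
  push_cast
  ring

theorem stmt8 (β : ℝ) (M : ℕ) (hM : 1 ≤ M) (n : ℕ) (hn : n + 1 = M ∨ n = M) :
    ((M : ℝ) + 1) * ∫ x in (-1/2 : ℝ)..(1/2),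
        fejer (M + 1) (x - β) * chebU n (Real.cos (2 * Real.pi * x)) *
          (Real.sin (2 * Real.pi * x)) ^ 2
      = (((M : ℝ) - n + 1) / 2) * Real.cos (2 * Real.pi * n * β) :=
  stmt8_general β M n hn
end
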